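/- Parametrized fixed points preserve conjugation: for Scott-continuous ψ : hom(X,Y) × hom(P,Q) → hom(X,Y), the conjugate of its parametrized fixed point equals the parametrized fixed point of its conjugate, i.e., for all p : P → Q, (pfix ψ)(p†)† = (pfix ψ̄)(p), where ψ̄(g,q) = ψ(g†,q†)†. -/

import Mathlib

open CategoryTheory

universe v u

/-- The `n`-fold parametrized iterate: `ψ⁰(x,p) = x`, `ψ^{n+1}(x,p) = ψ(ψⁿ(x,p), p)`. -/
def pIter {A B : Type*} (ψ : A × B → A) : ℕ → A → B → A
  | 0, x, _ => x
  | n + 1, x, p => ψ (pIter ψ n x p, p)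

/-!
Since `f ↦ f†` is monotone and involutive, it is an order isomorphism between hom-sets; in
particular it preserves `⊥` and suprema of directed sets. It intertwines `ψ` with its conjugate
`ψ̄`, hence carries the Kleene chain `ψⁿ(⊥, q†)` onto the chain `ψ̄ⁿ(⊥, q)`, and so the supremum
of the first onto that of the second.
-/

theorem pIter_semiconj {A A' B B' : Type*} {ψ : A × B → A} {ψ' : A' × B' → A'} {e : A → A'}
    {g : B' → B} (h : ∀ a q, ψ' (e a, q) = e (ψ (a, g q))) (n : ℕ) (x : A) (q : B') :
    e (pIter ψ n x (g q)) = pIter ψ' n (e x) q := by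
  induction n with
  | zero => rfl
  | succ n ih => rw [pIter, pIter, ← ih, h]

theorem monotone_pIter_bot {A B : Type*} [Preorder A] [OrderBot A] [Preorder B]
    {ψ : A × B → A} (hψ : Monotone ψ) (p : B) : Monotone fun n => pIter ψ n ⊥ p := by
  refine monotone_nat_of_le_succ fun n => ?_
  induction n with
  | zero => exact bot_le
  | succ n ih => exact hψ ⟨ih, le_rfl⟩

theorem OrderIso.map_sSup_of_directedOn {α β : Type*} [CompletePartialOrder α]
    [CompletePartialOrder β] (e : α ≃o β) {s : Set α} (hs : DirectedOn (· ≤ ·) s) :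
    e (sSup s) = sSup (e '' s) :=
  (e.isLUB_image'.2 hs.isLUB_sSup).unique (hs.mono_comp fun _ _ h => e.monotone h).isLUB_sSup

/-- Parametrized fixed points preserve conjugation: for
Scott-continuous `ψ : hom(X,Y) × hom(P,Q) → hom(X,Y)`, the conjugate of its
parametrized fixed point equals the parametrized fixed point of its conjugate:
for all `q : Q ⟶ P`, `(pfix ψ)(q†)† = (pfix ψ̄)(q)`, where
`ψ̄(g,q) = ψ(g†,q†)†` and `(pfix ψ)(p) = sup_n ψⁿ(⊥,p)`. -/
theorem pfix_preserves_conjugation {C : Type u} [Category.{v} C]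
    [∀ X Y : C, CompletePartialOrder (X ⟶ Y)] [∀ X Y : C, OrderBot (X ⟶ Y)]
    (dag : ∀ {X Y : C}, (X ⟶ Y) → (Y ⟶ X))
    (dag_id : ∀ X : C, dag (𝟙 X) = 𝟙 X)
    (dag_comp : ∀ {X Y Z : C} (f : X ⟶ Y) (g : Y ⟶ Z), dag (f ≫ g) = dag g ≫ dag f)
    (dag_dag : ∀ {X Y : C} (f : X ⟶ Y), dag (dag f) = f)
    (dag_mono : ∀ {X Y : C} {f g : X ⟶ Y}, f ≤ g → dag f ≤ dag g)
    {X Y P Q : C} (ψ : (X ⟶ Y) × (P ⟶ Q) → (X ⟶ Y)) (hψ : ScottContinuous ψ) :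
    ∀ q : Q ⟶ P,
      dag (sSup (Set.range fun n => pIter ψ n ⊥ (dag q))) =
        sSup (Set.range fun n =>
          pIter (fun gq : (Y ⟶ X) × (Q ⟶ P) => dag (ψ (dag gq.1, dag gq.2)))
            n ⊥ q) := by
  intro q
  let e : (X ⟶ Y) ≃o (Y ⟶ X) :=
    OrderIso.ofHomInv ⟨dag, fun _ _ => dag_mono⟩ ⟨dag, fun _ _ => dag_mono⟩
      (by ext; exact dag_dag _) (by ext; exact dag_dag _)
  let ψbar : (Y ⟶ X) × (Q ⟶ P) → (Y ⟶ X) := fun gq => dag (ψ (dag gq.1, dag gq.2))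
  have hchain (n : ℕ) : e (pIter ψ n ⊥ (dag q)) = pIter ψbar n ⊥ q := by
    have hconj (a : X ⟶ Y) (q' : Q ⟶ P) : ψbar (e a, q') = e (ψ (a, dag q')) :=
      congrArg (fun f => dag (ψ (f, dag q'))) (dag_dag a)
    rw [pIter_semiconj hconj, e.map_bot]
  have hdir := (monotone_pIter_bot hψ.monotone (dag q)).directed_le.directedOn_range
  rw [show dag _ = e _ from rfl, e.map_sSup_of_directedOn hdir, ← Set.range_comp]
  exact congrArg (fun f => sSup (Set.range f)) (funext hchain)
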